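/- arXiv:math/9910086 — 5 statements merged into one kernel-verified Lean document; each statement's English description precedes it below -/
import Mathlib

section
/- Let G be a second-countable topological group equipped with its Borel σ-algebra, μ a Borel measure on G, and G' a dense subgroup of G such that μ is quasi-invariant relative to G'. If μ(V) > 0 for some nonempty open subset V of G, then μ(U) > 0 for every nonempty open subset U of G; in particular μ has full support. -/
/-!
If `μ U = 0`, quasi-invariance makes every translate `z • U` with `z ∈ G'` null. Since `G'` is
dense, these translates cover `G`, so every point has a null neighbourhood, and second
countability (Lindelöf) forces `μ = 0`, contradicting `0 < μ V`.
-/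

open MeasureTheory Pointwise

theorem Dense.exists_mem_smul_of_isOpen {G : Type*} [Group G] [TopologicalSpace G]
    [IsTopologicalGroup G] {S : Set G} (hS : Dense S) {U : Set G} (hU : IsOpen U)
    (hne : U.Nonempty) (x : G) : ∃ z ∈ S, x ∈ z • U := by
  obtain ⟨u, hu⟩ := hne
  have hopen : IsOpen {z : G | z⁻¹ * x ∈ U} := hU.preimage (by fun_prop)
  obtain ⟨z, hzS, hzU⟩ := hS.exists_mem_open hopen ⟨x * u⁻¹, by simpa [mul_assoc] using hu⟩
  exact ⟨z, hzS, Set.mem_smul_set_iff_inv_smul_mem.2 hzU⟩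

theorem MeasureTheory.Measure.eq_zero_of_dense_smul_null {G : Type*} [Group G]
    [TopologicalSpace G] [IsTopologicalGroup G] [SecondCountableTopology G]
    [MeasurableSpace G] (μ : Measure G) {S : Set G} (hS : Dense S) {U : Set G} (hU : IsOpen U)
    (hne : U.Nonempty) (hnull : ∀ z ∈ S, μ (z • U) = 0) : μ = 0 := by
  refine Measure.measure_univ_eq_zero.1 (measure_null_of_locally_null _ fun x _ => ?_)
  obtain ⟨z, hzS, hxz⟩ := hS.exists_mem_smul_of_isOpen hU hne x
  exact ⟨z • U, mem_nhdsWithin_of_mem_nhds ((hU.smul z).mem_nhds hxz), hnull z hzS⟩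

theorem MeasureTheory.Measure.inv_smul_null_of_map_mul_left_absolutelyContinuous {G : Type*}
    [Group G] [MeasurableSpace G] [MeasurableMul G] {μ : Measure G} {z : G}
    (hac : μ.map (fun g => z * g) ≪ μ) {s : Set G} (hs : μ s = 0) : μ (z⁻¹ • s) = 0 := by
  rw [← Set.preimage_smul]
  exact le_zero_iff.1 <|
    (Measure.le_map_apply (measurable_const_mul z).aemeasurable s).trans (hac hs).le

theorem stmt_0_general {G : Type*} [Group G] [TopologicalSpace G] [IsTopologicalGroup G]
    [SecondCountableTopology G] [MeasurableSpace G] [BorelSpace G]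
    (μ : Measure G) (G' : Subgroup G) (hdense : Dense (G' : Set G))
    (hqi : ∀ z ∈ G', μ.map (fun g => z * g) ≪ μ ∧ μ ≪ μ.map (fun g => z * g))
    (V : Set G) (hVpos : 0 < μ V) :
    ∀ U : Set G, IsOpen U → U.Nonempty → 0 < μ U := by
  intro U hU hne
  refine pos_iff_ne_zero.2 fun hU0 => ?_
  have hμ : μ = 0 := μ.eq_zero_of_dense_smul_null hdense hU hne fun z hz => by
    simpa using Measure.inv_smul_null_of_map_mul_left_absolutelyContinuous
      (hqi z⁻¹ (G'.inv_mem hz)).1 hU0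
  simp [hμ] at hVpos

/-- If a Borel measure on a second-countable topological group is quasi-invariant
relative to a dense subgroup and gives positive measure to some nonempty open set,
then it gives positive measure to every nonempty open set. -/
theorem stmt_0 {G : Type*} [Group G] [TopologicalSpace G] [IsTopologicalGroup G]
    [SecondCountableTopology G] [MeasurableSpace G] [BorelSpace G]
    (μ : Measure G) (G' : Subgroup G) (hdense : Dense (G' : Set G))
    (hqi : ∀ z ∈ G', μ.map (fun g => z * g) ≪ μ ∧ μ ≪ μ.map (fun g => z * g))
    (V : Set G) (hVopen : IsOpen V) (hVne : V.Nonempty) (hVpos : 0 < μ V) :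
    ∀ U : Set G, IsOpen U → U.Nonempty → 0 < μ U :=
  stmt_0_general μ G' hdense hqi V hVpos
end

section
/- Let G be a Hausdorff topological group equipped with its Borel σ-algebra, on which multiplication is measurable, and μ a Borel probability measure on G whose topological support is all of G. If z ∈ G, z ≠ e, and μ_z is mutually absolutely continuous with μ, then T^μ(z) is not the identity operator on L²(G,μ,ℂ). Consequently, if μ is quasi-invariant relative to a subgroup G', the regular representation T^μ : G' → U(L²(G,μ,ℂ)) is injective. -/
/-!
If `T^μ(z₁)` and `T^μ(z₂)` agreed for `z₁ ≠ z₂`, test them on the indicator of an open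
neighbourhood `V` of `1` with `z₁V ∩ z₂V = ∅`: on `z₁V` the first image is `√ρ_μ(z₁, ·)` and
the second vanishes, so `ρ_μ(z₁, ·) = 0` a.e. on `z₁V`. As `dμ_{z₁} = ρ_μ(z₁, ·) dμ`, this forces
`μ V = μ_{z₁}(z₁V) = 0`, contradicting full support. Taking `z₂ = 1` gives the first claim, and
the second is the same argument applied to two elements of `G'` with `T z₁ = T z₂`.
-/

open MeasureTheory Pointwise

namespace MeasureTheory.Measure

lemma measure_eq_zero_of_ae_toReal_rnDeriv_eq_zero {α : Type*} [MeasurableSpace α]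
    {μ ν : Measure α} [SigmaFinite μ] [SigmaFinite ν] (hμν : μ ≪ ν) {s : Set α}
    (h : ∀ᵐ x ∂ν, x ∈ s → (μ.rnDeriv ν x).toReal = 0) : μ s = 0 := by
  rw [measure_eq_zero_iff_ae_notMem]
  filter_upwards [rnDeriv_pos hμν, hμν.ae_le (rnDeriv_lt_top μ ν), hμν.ae_le h]
    with x hpos hfin hzero hx
  exact ((ENNReal.toReal_eq_zero_iff _).mp (hzero hx)).elim hpos.ne' hfin.ne

end MeasureTheory.Measure

section LeftTranslation

variable {G : Type*} [Group G] [MeasurableSpace G]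

/-- The operator `T^μ(z)`, acting on functions rather than on `L²` classes. -/
noncomputable def regularRep (μ : Measure G) (z : G) (f : G → ℂ) : G → ℂ :=
  fun g => (Real.sqrt (((μ.map (z * ·)).rnDeriv μ g).toReal) : ℂ) * f (z⁻¹ * g)

lemma regularRep_indicator_one (μ : Measure G) (z : G) (V : Set G) :
    regularRep μ z (V.indicator 1) =
      (z • V).indicator fun g => (Real.sqrt (((μ.map (z * ·)).rnDeriv μ g).toReal) : ℂ) := by
  ext g
  by_cases hg : g ∈ z • V
  · have : z⁻¹ * g ∈ V := Set.mem_smul_set_iff_inv_smul_mem.mp hg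
    simp [regularRep, hg, this]
  · have : z⁻¹ * g ∉ V := fun h => hg (Set.mem_smul_set_iff_inv_smul_mem.mpr h)
    simp [regularRep, hg, this]

variable [MeasurableMul G] {μ : Measure G}

lemma map_mul_left_smul_set (z : G) (V : Set G) : μ.map (z * ·) (z • V) = μ V := by
  rw [← MeasurableEquiv.coe_mulLeft, MeasurableEquiv.map_apply]
  congr 1
  ext g
  simp [Set.mem_smul_set_iff_inv_smul_mem]

lemma map_mul_left_inv_absolutelyContinuous {z : G} (h : μ ≪ μ.map (z * ·)) :
    μ.map (z⁻¹ * ·) ≪ μ := by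
  have hinv : μ.map (z⁻¹ * ·) ≪ (μ.map (z * ·)).map (z⁻¹ * ·) :=
    h.map (measurable_const_mul _)
  simpa only [Measure.map_map (measurable_const_mul _) (measurable_const_mul _),
    Function.comp_def, inv_mul_cancel_left, Measure.map_id'] using hinv

lemma regularRep_congr_ae {z : G} (h : μ ≪ μ.map (z * ·)) {f f' : G → ℂ} (hf : f =ᵐ[μ] f') :
    regularRep μ z f =ᵐ[μ] regularRep μ z f' := by
  have hcomp : f ∘ (z⁻¹ * ·) =ᵐ[μ] f' ∘ (z⁻¹ * ·) :=
    ae_eq_comp' (measurable_const_mul _).aemeasurable hf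
      (map_mul_left_inv_absolutelyContinuous h)
  filter_upwards [hcomp] with g hg
  simp only [regularRep, Function.comp_apply] at hg ⊢
  rw [hg]

omit [MeasurableMul G] in
lemma regularRep_one_ae_eq [SigmaFinite μ] (f : G → ℂ) : regularRep μ 1 f =ᵐ[μ] f := by
  filter_upwards [μ.rnDeriv_self] with g hg
  simp [regularRep, hg]

end LeftTranslation

lemma exists_isOpen_one_mem_disjoint_smul {G : Type*} [Group G] [TopologicalSpace G]
    [ContinuousMul G] [T2Space G] {z₁ z₂ : G} (hne : z₁ ≠ z₂) :
    ∃ V : Set G, IsOpen V ∧ (1 : G) ∈ V ∧ Disjoint (z₁ • V) (z₂ • V) := by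
  obtain ⟨U₁, U₂, hU₁, hU₂, hz₁, hz₂, hdisj⟩ := t2_separation hne
  refine ⟨(z₁ * ·) ⁻¹' U₁ ∩ (z₂ * ·) ⁻¹' U₂,
    (hU₁.preimage (continuous_const_mul z₁)).inter (hU₂.preimage (continuous_const_mul z₂)),
    by simp [hz₁, hz₂], hdisj.mono ?_ ?_⟩
  · rintro _ ⟨g, ⟨hg, -⟩, rfl⟩; exact hg
  · rintro _ ⟨g, ⟨-, hg⟩, rfl⟩; exact hg

lemma exists_not_regularRep_ae_eq {G : Type*} [Group G] [TopologicalSpace G] [ContinuousMul G]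
    [T2Space G] [MeasurableSpace G] [BorelSpace G] (μ : Measure G) [IsFiniteMeasure μ]
    (hfull : ∀ U : Set G, IsOpen U → U.Nonempty → 0 < μ U) {z₁ z₂ : G} (hne : z₁ ≠ z₂)
    (h₁ : μ.map (z₁ * ·) ≪ μ) (h₁' : μ ≪ μ.map (z₁ * ·)) (h₂' : μ ≪ μ.map (z₂ * ·)) :
    ∃ f : Lp ℂ 2 μ, ¬ regularRep μ z₁ f =ᵐ[μ] regularRep μ z₂ f := by
  obtain ⟨V, hV, h1V, hdisj⟩ := exists_isOpen_one_mem_disjoint_smul hne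
  refine ⟨indicatorConstLp 2 hV.measurableSet (measure_ne_top μ V) 1, fun heq => ?_⟩
  have hf : ⇑(indicatorConstLp 2 hV.measurableSet (measure_ne_top μ V) (1 : ℂ)) =ᵐ[μ]
      V.indicator 1 := indicatorConstLp_coeFn
  have hind := (regularRep_congr_ae h₁' hf).symm.trans (heq.trans (regularRep_congr_ae h₂' hf))
  rw [regularRep_indicator_one, regularRep_indicator_one] at hind
  have hzero : ∀ᵐ g ∂μ, g ∈ z₁ • V → ((μ.map (z₁ * ·)).rnDeriv μ g).toReal = 0 := by
    filter_upwards [hind] with g hg hg₁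
    rw [Set.indicator_of_mem hg₁, Set.indicator_of_notMem (hdisj.notMem_of_mem_left hg₁),
      Complex.ofReal_eq_zero, Real.sqrt_eq_zero'] at hg
    exact hg.antisymm ENNReal.toReal_nonneg
  have hμV : μ V = 0 := by
    rw [← map_mul_left_smul_set z₁ V]
    exact Measure.measure_eq_zero_of_ae_toReal_rnDeriv_eq_zero h₁ hzero
  exact (hfull V hV ⟨1, h1V⟩).ne' hμV

/-- If `μ` is a Borel probability measure of full support on a Hausdorff topological
group `G`, then for `z ≠ e` with `μ_z` mutually absolutely continuous with `μ`, the
operator `T^μ(z)` is not the identity on `L²(G,μ,ℂ)`; consequently, for a subgroup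
`G'` relative to which `μ` is quasi-invariant, any family of isometric isomorphisms
realizing the regular representation `T^μ` is injective. -/
theorem stmt_4 {G : Type*} [Group G] [TopologicalSpace G] [IsTopologicalGroup G]
    [T2Space G] [MeasurableSpace G] [BorelSpace G]
    (μ : Measure G) [IsProbabilityMeasure μ]
    (hfull : ∀ U : Set G, IsOpen U → U.Nonempty → 0 < μ U) :
    (∀ z : G, z ≠ 1 → μ.map (fun g => z * g) ≪ μ → μ ≪ μ.map (fun g => z * g) →
      ∃ f : Lp ℂ 2 μ,
        ¬ ((fun g => (Real.sqrt (((μ.map (fun g' => z * g')).rnDeriv μ g).toReal) : ℂ)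
            * f (z⁻¹ * g)) =ᵐ[μ] (f : G → ℂ))) ∧
    (∀ G' : Subgroup G,
      (∀ z ∈ G', μ.map (fun g => z * g) ≪ μ ∧ μ ≪ μ.map (fun g => z * g)) →
      ∀ T : G' → (Lp ℂ 2 μ ≃ₗᵢ[ℂ] Lp ℂ 2 μ),
        (∀ z : G', ∀ f : Lp ℂ 2 μ, (T z f : G → ℂ) =ᵐ[μ]
          fun g => (Real.sqrt (((μ.map (fun g' => (z : G) * g')).rnDeriv μ g).toReal) : ℂ)
            * f ((z : G)⁻¹ * g)) →
        Function.Injective T) := by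
  refine ⟨fun z hz hac hac' => ?_, fun G' hG' T hT z₁ z₂ hTz => ?_⟩
  · have h₂' : μ ≪ μ.map ((1 : G) * ·) := by
      simpa [Measure.map_id'] using Measure.AbsolutelyContinuous.rfl
    obtain ⟨f, hf⟩ := exists_not_regularRep_ae_eq μ hfull hz hac hac' h₂'
    exact ⟨f, fun hTf => hf (hTf.trans (regularRep_one_ae_eq _).symm)⟩
  · by_contra hne
    obtain ⟨f, hf⟩ := exists_not_regularRep_ae_eq μ hfull (Subtype.coe_ne_coe.mpr hne)
      (hG' z₁ z₁.2).1 (hG' z₁ z₁.2).2 (hG' z₂ z₂.2).2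
    exact hf ((hT z₁ f).symm.trans (hTz ▸ hT z₂ f))
end

section
/- Let G be a separable metrizable topological group equipped with its Borel σ-algebra, G' a metrizable topological group together with a continuous injective homomorphism j : G' → G with dense image, and μ a Borel probability measure on G quasi-invariant relative to j(G'). Assume there is a jointly continuous function ρ : G' × G → (0,∞) such that ρ(e,·) = 1 and, for each z ∈ G', ρ(z,·) is a version of the Radon–Nikodym derivative dμ_{j(z)}/dμ. Then for every f ∈ L²(G,μ,ℂ) the map z ↦ T^μ(j(z))f is continuous from G' to L²(G,μ,ℂ); that is, the regular representation T^μ of G' is strongly continuous. -/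
/-!
Each `T(z)` is an isometry of `L²(μ)`, by the change of variables
`∫ ρ(z,g) u(j(z)⁻¹ g) dμ = ∫ u dμ`. For a bounded continuous `u`, continuity of `ρ` gives
pointwise convergence `T(z) u → T(z₀) u` as `z → z₀`; since all `T(z) u` have the same `L²` norm,
Fatou's lemma applied to `2 (|T(z) u|² + |T(z₀) u|²) - |T(z) u - T(z₀) u|²` upgrades this to
convergence in `L²` (Riesz's lemma). The `T(z)` being equicontinuous, convergence extends from the
dense set of bounded continuous functions to all of `L²`.
-/

open MeasureTheory Filter Topology ENNReal

namespace MeasureTheory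

variable {α : Type*} [MeasurableSpace α] {μ : Measure α} {ι : Type*} {l : Filter ι}
  [l.IsCountablyGenerated]

theorem tendsto_lintegral_zero_of_le_of_lintegral_eq {A D : ι → α → ℝ≥0∞} {d : α → ℝ≥0∞}
    (hA : ∀ i, AEMeasurable (A i) μ) (hD : ∀ i, AEMeasurable (D i) μ) (hAD : ∀ i, A i ≤ D i)
    (hA_lim : ∀ᵐ a ∂μ, Tendsto (A · a) l (𝓝 0)) (hD_lim : ∀ᵐ a ∂μ, Tendsto (D · a) l (𝓝 (d a)))
    (hD_int : ∀ i, ∫⁻ a, D i a ∂μ = ∫⁻ a, d a ∂μ) (hd_fin : ∫⁻ a, d a ∂μ ≠ ∞) :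
    Tendsto (fun i => ∫⁻ a, A i a ∂μ) l (𝓝 0) := by
  rcases l.eq_or_neBot with rfl | _
  · exact tendsto_bot
  set C := ∫⁻ a, d a ∂μ
  have hA_le : ∀ i, ∫⁻ a, A i a ∂μ ≤ C := fun i => (hD_int i) ▸ lintegral_mono (hAD i)
  have hB_int : ∀ i, ∫⁻ a, (D i a - A i a) ∂μ = C - ∫⁻ a, A i a ∂μ := fun i => by
    rw [lintegral_sub' (hA i) (ne_top_of_le_ne_top hd_fin (hA_le i)) (ae_of_all _ (hAD i)),
      hD_int]
  -- Fatou's lemma for `D - A`, whose pointwise limit is `d`.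
  have hB_lim : Tendsto (fun i => C - ∫⁻ a, A i a ∂μ) l (𝓝 C) := by
    refine tendsto_of_le_liminf_of_limsup_le ?_
      (limsup_le_of_le (by isBoundedDefault) (Eventually.of_forall fun _ => tsub_le_self))
    calc C = ∫⁻ a, liminf (fun i => D i a - A i a) l ∂μ := by
          refine lintegral_congr_ae ?_
          filter_upwards [hA_lim, hD_lim] with a hA hD
          have := ENNReal.Tendsto.sub hD hA (Or.inr zero_ne_top)
          rw [tsub_zero] at this
          exact this.liminf_eq.symm
      _ ≤ liminf (fun i => ∫⁻ a, (D i a - A i a) ∂μ) l :=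
          lintegral_liminf_le' fun i => (hD i).sub (hA i)
      _ = liminf (fun i => C - ∫⁻ a, A i a ∂μ) l := by simp only [hB_int]
  have := ENNReal.Tendsto.sub tendsto_const_nhds hB_lim (Or.inl hd_fin)
  rw [tsub_self] at this
  exact this.congr fun i => ENNReal.sub_sub_cancel hd_fin (hA_le i)

theorem tendsto_eLpNorm_sub_of_tendsto_ae_of_eLpNorm_eq {E : Type*} [NormedAddCommGroup E]
    {p : ℝ≥0∞} (hp0 : p ≠ 0) (hp : p ≠ ∞) {F : ι → α → E} {f : α → E}
    (hF : ∀ i, AEStronglyMeasurable (F i) μ) (hf : MemLp f p μ)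
    (hF_norm : ∀ i, eLpNorm (F i) p μ = eLpNorm f p μ)
    (hF_lim : ∀ᵐ a ∂μ, Tendsto (F · a) l (𝓝 (f a))) :
    Tendsto (fun i => eLpNorm (F i - f) p μ) l (𝓝 0) := by
  set q := p.toReal
  have hq : 0 < q := ENNReal.toReal_pos hp0 hp
  have hF_int : ∀ i, ∫⁻ a, ‖F i a‖ₑ ^ q ∂μ = ∫⁻ a, ‖f a‖ₑ ^ q ∂μ := fun i =>
    rpow_left_injective (one_div_pos.2 hq).ne' <| by
      simpa only [eLpNorm_eq_lintegral_rpow_enorm_toReal hp0 hp] using hF_norm i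
  have hf_fin : ∫⁻ a, ‖f a‖ₑ ^ q ∂μ ≠ ∞ :=
    (lintegral_rpow_enorm_lt_top_of_eLpNorm_lt_top hp0 hp hf.eLpNorm_lt_top).ne
  set K := LpAddConst (ENNReal.ofReal q)⁻¹
  have hK : K ≠ ∞ := (LpAddConst_lt_top _).ne
  have hmeas : ∀ {g : α → E}, AEStronglyMeasurable g μ → AEMeasurable (‖g ·‖ₑ ^ q) μ :=
    fun hg => hg.enorm.pow_const q
  have hA_lim : ∀ᵐ a ∂μ, Tendsto (fun i => ‖F i a - f a‖ₑ ^ q) l (𝓝 0) := by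
    filter_upwards [hF_lim] with a ha
    have h0 : Tendsto (fun i => ‖F i a - f a‖ₑ) l (𝓝 0) := by
      simpa using (tendsto_sub_nhds_zero_iff.2 ha).enorm
    simpa [Function.comp_def, ENNReal.zero_rpow_of_pos hq] using
      ((ENNReal.continuous_rpow_const (y := q)).tendsto 0).comp h0
  have hD_lim : ∀ᵐ a ∂μ, Tendsto (fun i => K * (‖F i a‖ₑ ^ q + ‖f a‖ₑ ^ q)) l
      (𝓝 (K * (‖f a‖ₑ ^ q + ‖f a‖ₑ ^ q))) := by
    filter_upwards [hF_lim] with a ha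
    exact ENNReal.Tendsto.const_mul
      (((ENNReal.continuous_rpow_const.tendsto _).comp ha.enorm).add tendsto_const_nhds)
      (Or.inr hK)
  have hA := tendsto_lintegral_zero_of_le_of_lintegral_eq (A := fun i a => ‖F i a - f a‖ₑ ^ q)
    (D := fun i a => K * (‖F i a‖ₑ ^ q + ‖f a‖ₑ ^ q))
    (fun i => hmeas ((hF i).sub hf.1)) (fun i => ((hmeas (hF i)).add (hmeas hf.1)).const_mul K)
    (fun i a => (rpow_le_rpow enorm_sub_le hq.le).trans
      (rpow_add_le_mul_rpow_add_rpow' _ _ hq.le))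
    hA_lim hD_lim
    (fun i => by
      rw [lintegral_const_mul' _ _ hK, lintegral_const_mul' _ _ hK,
        lintegral_add_right' _ (hmeas hf.1), lintegral_add_right' _ (hmeas hf.1), hF_int])
    (by
      rw [lintegral_const_mul' _ _ hK, lintegral_add_right' _ (hmeas hf.1)]
      exact mul_ne_top hK (add_ne_top.2 ⟨hf_fin, hf_fin⟩))
  have := (ENNReal.continuous_rpow_const (y := 1 / q)).tendsto 0 |>.comp hA
  rw [ENNReal.zero_rpow_of_pos (one_div_pos.2 hq)] at this
  simpa only [eLpNorm_eq_lintegral_rpow_enorm_toReal hp0 hp, Function.comp_def, Pi.sub_apply]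
    using this

section LeftTranslate

variable {G E : Type*} [Group G] [MeasurableSpace G]
  [NormedAddCommGroup E] [NormedSpace ℝ E]

structure IsLeftTranslateDensity (μ : Measure G) (a : G) (r : G → ℝ) : Prop where
  quasiMeasurePreserving_inv_mul : Measure.QuasiMeasurePreserving (a⁻¹ * ·) μ μ
  map_mul_left_absolutelyContinuous : μ.map (a * ·) ≪ μ
  aemeasurable : AEMeasurable r μ
  ofReal_ae_eq_rnDeriv : (fun g => ENNReal.ofReal (r g)) =ᵐ[μ] (μ.map (a * ·)).rnDeriv μ

noncomputable def weightedTranslate (r : G → ℝ) (a : G) (u : G → E) : G → E :=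
  fun g => √(r g) • u (a⁻¹ * g)

namespace IsLeftTranslateDensity

variable {μ : Measure G} {a : G} {r : G → ℝ}

theorem lintegral_ofReal_mul_comp_inv_mul [MeasurableMul G] [SigmaFinite μ]
    (h : IsLeftTranslateDensity μ a r) {u : G → ℝ≥0∞} (hu : AEMeasurable u μ) :
    ∫⁻ g, ENNReal.ofReal (r g) * u (a⁻¹ * g) ∂μ = ∫⁻ g, u g ∂μ := by
  have hu' : AEMeasurable (fun g => u (a⁻¹ * g)) μ :=
    hu.comp_quasiMeasurePreserving h.quasiMeasurePreserving_inv_mul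
  calc ∫⁻ g, ENNReal.ofReal (r g) * u (a⁻¹ * g) ∂μ
      = ∫⁻ g, (μ.map (a * ·)).rnDeriv μ g * u (a⁻¹ * g) ∂μ :=
        lintegral_congr_ae (h.ofReal_ae_eq_rnDeriv.mul (EventuallyEq.refl _ _))
    _ = ∫⁻ g, u (a⁻¹ * g) ∂(μ.map (a * ·)) :=
        lintegral_rnDeriv_mul h.map_mul_left_absolutelyContinuous hu'
    _ = ∫⁻ g, u g ∂μ := by
        rw [lintegral_map' (hu'.mono_ac h.map_mul_left_absolutelyContinuous)
          (measurable_const_mul a).aemeasurable]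
        simp only [inv_mul_cancel_left]

theorem aestronglyMeasurable_weightedTranslate (h : IsLeftTranslateDensity μ a r) {u : G → E}
    (hu : AEStronglyMeasurable u μ) :
    AEStronglyMeasurable (weightedTranslate r a u) μ :=
  h.aemeasurable.sqrt.aestronglyMeasurable.smul
    (hu.comp_quasiMeasurePreserving h.quasiMeasurePreserving_inv_mul)

theorem eLpNorm_weightedTranslate [MeasurableMul G] [SigmaFinite μ]
    (h : IsLeftTranslateDensity μ a r) {u : G → E} (hu : AEStronglyMeasurable u μ) :
    eLpNorm (weightedTranslate r a u) 2 μ = eLpNorm u 2 μ := by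
  simp only [eLpNorm_eq_lintegral_rpow_enorm_toReal two_ne_zero ofNat_ne_top, weightedTranslate]
  congr 1
  have hsq : ∀ t : ℝ, ‖√t‖ₑ ^ (2 : ℝ) = ENNReal.ofReal t := fun t => by
    rw [Real.enorm_of_nonneg (Real.sqrt_nonneg t), ENNReal.rpow_two,
      ← ENNReal.ofReal_pow (Real.sqrt_nonneg t)]
    rcases le_total 0 t with ht | ht
    · rw [Real.sq_sqrt ht]
    · rw [Real.sqrt_eq_zero'.2 ht, ENNReal.ofReal_of_nonpos ht]
      simp
  simp only [toReal_ofNat, enorm_smul, mul_rpow_of_nonneg _ _ zero_le_two, hsq]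
  exact h.lintegral_ofReal_mul_comp_inv_mul (hu.enorm.pow_const _)

theorem memLp_weightedTranslate [MeasurableMul G] [SigmaFinite μ]
    (h : IsLeftTranslateDensity μ a r) {u : G → E} (hu : MemLp u 2 μ) :
    MemLp (weightedTranslate r a u) 2 μ :=
  ⟨h.aestronglyMeasurable_weightedTranslate hu.1,
    (h.eLpNorm_weightedTranslate hu.1).symm ▸ hu.eLpNorm_lt_top⟩

theorem weightedTranslate_ae_congr (h : IsLeftTranslateDensity μ a r) {u v : G → E}
    (huv : u =ᵐ[μ] v) : weightedTranslate r a u =ᵐ[μ] weightedTranslate r a v := by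
  filter_upwards [h.quasiMeasurePreserving_inv_mul.ae_eq huv] with g hg
  simp only [weightedTranslate, Function.comp_apply] at hg ⊢
  rw [hg]

variable [MeasurableMul G] [SigmaFinite μ]

noncomputable def translateLp (h : IsLeftTranslateDensity μ a r) (u : Lp E 2 μ) : Lp E 2 μ :=
  (h.memLp_weightedTranslate (Lp.memLp u)).toLp _

theorem coeFn_translateLp (h : IsLeftTranslateDensity μ a r) (u : Lp E 2 μ) :
    h.translateLp u =ᵐ[μ] weightedTranslate r a u :=
  MemLp.coeFn_toLp _

theorem isometry_translateLp (h : IsLeftTranslateDensity μ a r) :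
    Isometry (h.translateLp : Lp E 2 μ → Lp E 2 μ) := by
  refine Isometry.of_dist_eq fun u v => ?_
  have hsub : ⇑(h.translateLp u) - ⇑(h.translateLp v) =ᵐ[μ] weightedTranslate r a (⇑u - ⇑v) :=
    (h.coeFn_translateLp u).sub (h.coeFn_translateLp v) |>.trans <|
      Eventually.of_forall fun g => (smul_sub _ _ _).symm
  rw [Lp.dist_def, Lp.dist_def, eLpNorm_congr_ae hsub,
    h.eLpNorm_weightedTranslate ((Lp.aestronglyMeasurable u).sub (Lp.aestronglyMeasurable v))]

end IsLeftTranslateDensity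

end LeftTranslate

section Continuity

variable {G E X : Type*} [Group G] [TopologicalSpace G] [IsTopologicalGroup G] [MeasurableSpace G]
  [BorelSpace G] [NormalSpace G] [NormedAddCommGroup E] [NormedSpace ℝ E]
  [SecondCountableTopologyEither G E] {μ : Measure G} [IsFiniteMeasure μ] [μ.WeaklyRegular]
  [TopologicalSpace X] [FirstCountableTopology X]

theorem continuous_translateLp {a : X → G} (ha : Continuous a) {r : X → G → ℝ}
    (hr : ∀ g, Continuous (r · g)) (h : ∀ x, IsLeftTranslateDensity μ (a x) (r x))
    (f : Lp E 2 μ) : Continuous fun x => (h x).translateLp f := by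
  have : Fact ((1 : ℝ≥0∞) ≤ 2) := ⟨one_le_two⟩
  refine continuous_iff_continuousAt.2 fun x₀ => ?_
  have hequi : Equicontinuous fun x => (h x).translateLp (E := E) :=
    Metric.equicontinuous_of_continuity_modulus id tendsto_id _
      fun u v x => ((h x).isometry_translateLp.dist_eq u v).le
  refine (BoundedContinuousFunction.toLp_denseRange E μ ℝ ofNat_ne_top).induction_on f
    (hequi.isClosed_setOfPred_tendsto (h x₀).isometry_translateLp.continuous) fun φ => ?_
  set u := BoundedContinuousFunction.toLp (E := E) 2 μ ℝ φ
  have hu : ⇑u =ᵐ[μ] φ := BoundedContinuousFunction.coeFn_toLp 2 μ ℝ φ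
  have hφ : MemLp φ 2 μ := (Lp.memLp u).ae_eq hu
  refine (Lp.tendsto_Lp_iff_tendsto_eLpNorm' _ _).2 ?_
  have hcongr : ∀ x, ⇑((h x).translateLp u) - ⇑((h x₀).translateLp u) =ᵐ[μ]
      weightedTranslate (r x) (a x) φ - weightedTranslate (r x₀) (a x₀) φ := fun x =>
    (((h x).coeFn_translateLp u).trans ((h x).weightedTranslate_ae_congr hu)).sub
      (((h x₀).coeFn_translateLp u).trans ((h x₀).weightedTranslate_ae_congr hu))
  simp_rw [eLpNorm_congr_ae (hcongr _)]
  exact tendsto_eLpNorm_sub_of_tendsto_ae_of_eLpNorm_eq two_ne_zero ofNat_ne_top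
    (fun x => (h x).aestronglyMeasurable_weightedTranslate hφ.1)
    ((h x₀).memLp_weightedTranslate hφ)
    (fun x => by rw [(h x).eLpNorm_weightedTranslate hφ.1, (h x₀).eLpNorm_weightedTranslate hφ.1])
    (ae_of_all _ fun g =>
      ((hr g).sqrt.smul (φ.continuous.comp (ha.inv.mul continuous_const))).tendsto x₀)

end Continuity

end MeasureTheory

theorem stmt_5_general {G G' : Type*} [Group G] [TopologicalSpace G] [IsTopologicalGroup G]
    [TopologicalSpace.MetrizableSpace G]
    [MeasurableSpace G] [BorelSpace G]
    [Group G'] [TopologicalSpace G']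
    [TopologicalSpace.MetrizableSpace G']
    (μ : Measure G) [IsProbabilityMeasure μ]
    (j : G' →* G) (hjcont : Continuous j)
    (hqi : ∀ z : G', μ.map (fun g => j z * g) ≪ μ ∧ μ ≪ μ.map (fun g => j z * g))
    (ρ : G' × G → ℝ) (hρcont : Continuous ρ)
    (hρversion : ∀ z : G',
      (fun g => ENNReal.ofReal (ρ (z, g))) =ᵐ[μ] (μ.map (fun g => j z * g)).rnDeriv μ) :
    ∀ f : Lp ℂ 2 μ, ∃ T : G' → Lp ℂ 2 μ,
      (∀ z : G', (T z : G → ℂ) =ᵐ[μ]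
        fun g => (Real.sqrt (ρ (z, g)) : ℂ) * f ((j z)⁻¹ * g)) ∧
      Continuous T := by
  have hρ : ∀ z, IsLeftTranslateDensity μ (j z) (fun g => ρ (z, g)) := fun z =>
    { quasiMeasurePreserving_inv_mul :=
        ⟨measurable_const_mul _, by simpa only [map_inv] using (hqi z⁻¹).1⟩
      map_mul_left_absolutelyContinuous := (hqi z).1
      aemeasurable := (hρcont.comp (Continuous.prodMk_right z)).aemeasurable
      ofReal_ae_eq_rnDeriv := hρversion z }
  intro f
  refine ⟨fun z => (hρ z).translateLp f, fun z => ?_,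
    continuous_translateLp hjcont (fun g => hρcont.comp (Continuous.prodMk_left g)) hρ f⟩
  filter_upwards [(hρ z).coeFn_translateLp f] with g hg
  rw [hg, weightedTranslate, Complex.real_smul]

/-- Strong continuity of the regular representation: if `μ` is a Borel probability
measure on a separable metrizable topological group `G`, quasi-invariant relative to
the dense image of a continuous injective homomorphism `j : G' → G`, and the
quasi-invariance factor `ρ` is jointly continuous, positive, with `ρ(e,·) = 1`, then
for every `f ∈ L²(G,μ,ℂ)` the map `z ↦ T^μ(j z) f` is continuous from `G'` into
`L²(G,μ,ℂ)`. -/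
theorem stmt_5 {G G' : Type*} [Group G] [TopologicalSpace G] [IsTopologicalGroup G]
    [TopologicalSpace.SeparableSpace G] [TopologicalSpace.MetrizableSpace G]
    [MeasurableSpace G] [BorelSpace G]
    [Group G'] [TopologicalSpace G'] [IsTopologicalGroup G']
    [TopologicalSpace.MetrizableSpace G']
    (μ : Measure G) [IsProbabilityMeasure μ]
    (j : G' →* G) (hjcont : Continuous j) (hjinj : Function.Injective j)
    (hjdense : DenseRange j)
    (hqi : ∀ z : G', μ.map (fun g => j z * g) ≪ μ ∧ μ ≪ μ.map (fun g => j z * g))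
    (ρ : G' × G → ℝ) (hρcont : Continuous ρ) (hρpos : ∀ p, 0 < ρ p)
    (hρone : ∀ g : G, ρ (1, g) = 1)
    (hρversion : ∀ z : G',
      (fun g => ENNReal.ofReal (ρ (z, g))) =ᵐ[μ] (μ.map (fun g => j z * g)).rnDeriv μ) :
    ∀ f : Lp ℂ 2 μ, ∃ T : G' → Lp ℂ 2 μ,
      (∀ z : G', (T z : G → ℂ) =ᵐ[μ]
        fun g => (Real.sqrt (ρ (z, g)) : ℂ) * f ((j z)⁻¹ * g)) ∧
      Continuous T :=
  stmt_5_general μ j hjcont hqi ρ hρcont hρversion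
end

section
/- Let G be a topological group equipped with its Borel σ-algebra, on which multiplication is measurable, and let μ and μ' be Borel probability measures on G which are mutually absolutely continuous and both quasi-invariant relative to a subgroup G'. Then the map V defined by (Vf)(g) = f(g)·((dμ/dμ')(g))^{1/2} is a surjective linear isometry from L²(G,μ,ℂ) onto L²(G,μ',ℂ) which intertwines the regular representations: V ∘ T^μ(ψ) = T^{μ'}(ψ) ∘ V for every ψ ∈ G'. -/
/-!
Multiplication by `√(dμ/dμ')` is an isometry `L²(μ) → L²(μ')` since
`∫ |f|² dμ = ∫ |f|² (dμ/dμ') dμ'`, and multiplication by `√(dμ'/dμ)` inverts it by the chain rule `(dμ'/dμ)(dμ/dμ') = 1`.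
Intertwining reduces to the identity
`(d(ψμ)/dμ) · (dμ/dμ') = (d(ψμ')/dμ') · (dμ/dμ') ∘ ψ⁻¹`:
by the chain rule both sides equal `d(ψμ)/dμ'`, using `d(ψμ)/d(ψμ') = (dμ/dμ') ∘ ψ⁻¹`.
-/

open scoped ENNReal

namespace MeasureTheory

variable {α : Type*} [MeasurableSpace α] {ν ν' : Measure α}

lemma ofReal_sqrt_toReal_mul (x y : ℝ≥0∞) :
    ((√(x * y).toReal : ℝ) : ℂ) = √x.toReal * √y.toReal := by
  rw [ENNReal.toReal_mul, Real.sqrt_mul ENNReal.toReal_nonneg, Complex.ofReal_mul]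

lemma enorm_mul_ofReal_sqrt_toReal_sq (z : ℂ) {x : ℝ≥0∞} (hx : x ≠ ∞) :
    ‖z * (√x.toReal : ℂ)‖ₑ ^ 2 = x * ‖z‖ₑ ^ 2 := by
  rw [enorm_mul, mul_pow, enorm_eq_nnnorm (√x.toReal : ℂ), Complex.nnnorm_real, ← enorm_eq_nnnorm,
    Real.enorm_of_nonneg (Real.sqrt_nonneg _),
    ← ENNReal.ofReal_pow (Real.sqrt_nonneg _), Real.sq_sqrt ENNReal.toReal_nonneg,
    ENNReal.ofReal_toReal hx, mul_comm]

noncomputable def sqrtRNDeriv (ν ν' : Measure α) (a : α) : ℂ := √(ν.rnDeriv ν' a).toReal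

lemma measurable_sqrtRNDeriv (ν ν' : Measure α) : Measurable (sqrtRNDeriv ν ν') :=
  Complex.measurable_ofReal.comp (Measure.measurable_rnDeriv ν ν').ennreal_toReal.sqrt

lemma eLpNorm_mul_sqrtRNDeriv [SigmaFinite ν] [SigmaFinite ν'] (hνν' : ν ≪ ν') {h : α → ℂ}
    (hh : AEStronglyMeasurable h ν') :
    eLpNorm (fun a => h a * sqrtRNDeriv ν ν' a) 2 ν' = eLpNorm h 2 ν := by
  simp only [eLpNorm_eq_lintegral_rpow_enorm_toReal two_ne_zero ENNReal.ofNat_ne_top,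
    ENNReal.toReal_ofNat, ENNReal.rpow_two]
  rw [← lintegral_rnDeriv_mul hνν' (hh.enorm.pow_const 2)]
  congr 1
  refine lintegral_congr_ae ?_
  filter_upwards [Measure.rnDeriv_lt_top ν ν'] with a ha
  exact enorm_mul_ofReal_sqrt_toReal_sq (h a) ha.ne

lemma MemLp.mul_sqrtRNDeriv [SigmaFinite ν] [SigmaFinite ν'] (hνν' : ν ≪ ν') (hν'ν : ν' ≪ ν)
    {h : α → ℂ} (hh : MemLp h 2 ν) : MemLp (fun a => h a * sqrtRNDeriv ν ν' a) 2 ν' := by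
  have hh' : AEStronglyMeasurable h ν' := hh.aestronglyMeasurable.mono_ac hν'ν
  refine ⟨hh'.mul (measurable_sqrtRNDeriv ν ν').aestronglyMeasurable, ?_⟩
  rw [eLpNorm_mul_sqrtRNDeriv hνν' hh']
  exact hh.eLpNorm_lt_top

noncomputable def Lp.mulSqrtRNDeriv [SigmaFinite ν] [SigmaFinite ν'] (hνν' : ν ≪ ν')
    (hν'ν : ν' ≪ ν) : Lp ℂ 2 ν →ₗᵢ[ℂ] Lp ℂ 2 ν' where
  toFun f := ((Lp.memLp f).mul_sqrtRNDeriv hνν' hν'ν).toLp _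
  map_add' f g := by
    rw [← MemLp.toLp_add]
    refine MemLp.toLp_congr _ _ ?_
    filter_upwards [hν'ν.ae_le (Lp.coeFn_add f g)] with a ha
    simp only [ha, Pi.add_apply, add_mul]
  map_smul' c f := by
    rw [RingHom.id_apply, ← MemLp.toLp_const_smul]
    refine MemLp.toLp_congr _ _ ?_
    filter_upwards [hν'ν.ae_le (Lp.coeFn_smul c f)] with a ha
    simp only [ha, Pi.smul_apply, smul_eq_mul, mul_assoc]
  norm_map' f := by
    rw [LinearMap.coe_mk, AddHom.coe_mk, Lp.norm_toLp,
      eLpNorm_mul_sqrtRNDeriv hνν' ((Lp.aestronglyMeasurable f).mono_ac hν'ν), Lp.norm_def]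

section mulSqrtRNDeriv

variable [SigmaFinite ν] [SigmaFinite ν'] (hνν' : ν ≪ ν') (hν'ν : ν' ≪ ν)

lemma Lp.coeFn_mulSqrtRNDeriv (f : Lp ℂ 2 ν) :
    Lp.mulSqrtRNDeriv hνν' hν'ν f =ᵐ[ν'] fun a => f a * sqrtRNDeriv ν ν' a :=
  MemLp.coeFn_toLp ((Lp.memLp f).mul_sqrtRNDeriv hνν' hν'ν)

include hν'ν in
lemma sqrtRNDeriv_mul_sqrtRNDeriv : ∀ᵐ a ∂ν', sqrtRNDeriv ν' ν a * sqrtRNDeriv ν ν' a = 1 := by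
  filter_upwards [Measure.rnDeriv_mul_rnDeriv hν'ν, Measure.rnDeriv_self ν'] with a ha ha'
  rw [sqrtRNDeriv, sqrtRNDeriv, ← ofReal_sqrt_toReal_mul, ← Pi.mul_apply, ha, ha']
  simp

lemma Lp.mulSqrtRNDeriv_leftInverse :
    Function.LeftInverse (Lp.mulSqrtRNDeriv hνν' hν'ν) (Lp.mulSqrtRNDeriv hν'ν hνν') := by
  intro f
  refine Lp.ext ?_
  filter_upwards [Lp.coeFn_mulSqrtRNDeriv hνν' hν'ν _,
    hν'ν.ae_le (Lp.coeFn_mulSqrtRNDeriv hν'ν hνν' f), sqrtRNDeriv_mul_sqrtRNDeriv hν'ν]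
    with a h₁ h₂ h₃
  rw [h₁, h₂, mul_assoc, h₃, mul_one]

end mulSqrtRNDeriv

lemma ae_comp_symm_of_absolutelyContinuous_map (e : α ≃ᵐ α) (hν'e : ν' ≪ ν'.map e)
    {p : α → Prop} (hp : ∀ᵐ a ∂ν', p a) : ∀ᵐ a ∂ν', p (e.symm a) :=
  hν'e.ae_le <| e.measurableEmbedding.ae_map_iff.2 <| by simpa only [e.symm_apply_apply] using hp

lemma rnDeriv_map_mul_rnDeriv [SigmaFinite ν] [SigmaFinite ν'] (e : α ≃ᵐ α) (hνν' : ν ≪ ν')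
    (hνe : ν.map e ≪ ν) (hν'e : ν' ≪ ν'.map e) :
    (ν.map e).rnDeriv ν * ν.rnDeriv ν' =ᵐ[ν'] (ν'.map e).rnDeriv ν' * (ν.rnDeriv ν' ∘ e.symm) := by
  have := e.sigmaFinite_map (μ := ν)
  have := e.sigmaFinite_map (μ := ν')
  have hchange : (ν.map e).rnDeriv (ν'.map e) =ᵐ[ν'] ν.rnDeriv ν' ∘ e.symm := by
    filter_upwards [ae_comp_symm_of_absolutelyContinuous_map e hν'e
      (e.measurableEmbedding.rnDeriv_map ν ν')] with a ha
    simpa only [e.apply_symm_apply, Function.comp_apply] using ha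
  filter_upwards [Measure.rnDeriv_mul_rnDeriv hνe,
    Measure.rnDeriv_mul_rnDeriv (hνν'.map e.measurable), hchange] with a h₁ h₂ h₃
  simp only [Pi.mul_apply] at h₁ h₂ ⊢
  rw [h₁, ← h₂, h₃, mul_comm]

/-- `T^ν(e) f` of the regular representation, for a translation `e`. -/
noncomputable def regularRepFun (ν : Measure α) (e : α ≃ᵐ α) (f : α → ℂ) (a : α) : ℂ :=
  sqrtRNDeriv (ν.map e) ν a * f (e.symm a)

lemma Lp.mulSqrtRNDeriv_regularRepFun [SigmaFinite ν] [SigmaFinite ν'] (hνν' : ν ≪ ν')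
    (hν'ν : ν' ≪ ν) (e : α ≃ᵐ α) (hνe : ν.map e ≪ ν) (hν'e : ν' ≪ ν'.map e)
    {f f₁ : Lp ℂ 2 ν} (hf₁ : f₁ =ᵐ[ν] regularRepFun ν e f) :
    Lp.mulSqrtRNDeriv hνν' hν'ν f₁ =ᵐ[ν'] regularRepFun ν' e (Lp.mulSqrtRNDeriv hνν' hν'ν f) := by
  filter_upwards [Lp.coeFn_mulSqrtRNDeriv hνν' hν'ν f₁, hν'ν.ae_le hf₁,
    ae_comp_symm_of_absolutelyContinuous_map e hν'e (Lp.coeFn_mulSqrtRNDeriv hνν' hν'ν f),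
    rnDeriv_map_mul_rnDeriv e hνν' hνe hν'e] with a h₁ h₂ h₃ h₄
  have hsqrt : sqrtRNDeriv (ν.map e) ν a * sqrtRNDeriv ν ν' a
      = sqrtRNDeriv (ν'.map e) ν' a * sqrtRNDeriv ν ν' (e.symm a) := by
    simp only [sqrtRNDeriv, ← ofReal_sqrt_toReal_mul]
    exact congrArg (fun x : ℝ≥0∞ => ((√x.toReal : ℝ) : ℂ)) h₄
  rw [h₁, h₂, regularRepFun, regularRepFun, h₃]
  linear_combination f (e.symm a) * hsqrt

end MeasureTheory

open MeasureTheory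

/-- If `μ` and `μ'` are mutually absolutely continuous Borel probability measures on
`G`, both quasi-invariant relative to a subgroup `G'`, then
`(Vf)(g) = f(g) · ((dμ/dμ')(g))^{1/2}` is a surjective linear isometry
`L²(G,μ,ℂ) → L²(G,μ',ℂ)` intertwining the regular representations:
`V ∘ T^μ(ψ) = T^{μ'}(ψ) ∘ V` for every `ψ ∈ G'`. -/
theorem stmt_9 {G : Type*} [Group G] [TopologicalSpace G] [IsTopologicalGroup G]
    [MeasurableSpace G] [BorelSpace G]
    (μ μ' : Measure G) [IsProbabilityMeasure μ] [IsProbabilityMeasure μ']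
    (hμμ' : μ ≪ μ') (hμ'μ : μ' ≪ μ) (G' : Subgroup G)
    (hqi : ∀ ψ ∈ G', μ.map (fun g => ψ * g) ≪ μ ∧ μ ≪ μ.map (fun g => ψ * g))
    (hqi' : ∀ ψ ∈ G', μ'.map (fun g => ψ * g) ≪ μ' ∧ μ' ≪ μ'.map (fun g => ψ * g)) :
    ∃ V : Lp ℂ 2 μ →ₗᵢ[ℂ] Lp ℂ 2 μ',
      Function.Surjective V ∧
      (∀ f : Lp ℂ 2 μ, (V f : G → ℂ) =ᵐ[μ']
        fun g => f g * (Real.sqrt ((μ.rnDeriv μ' g).toReal) : ℂ)) ∧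
      (∀ ψ : G, ψ ∈ G' → ∀ f f₁ : Lp ℂ 2 μ,
        ((f₁ : G → ℂ) =ᵐ[μ]
          fun g => (Real.sqrt (((μ.map (fun g' => ψ * g')).rnDeriv μ g).toReal) : ℂ)
            * f (ψ⁻¹ * g)) →
        ((V f₁ : G → ℂ) =ᵐ[μ']
          fun g => (Real.sqrt (((μ'.map (fun g' => ψ * g')).rnDeriv μ' g).toReal) : ℂ)
            * (V f) (ψ⁻¹ * g))) :=
  ⟨Lp.mulSqrtRNDeriv hμμ' hμ'μ, (Lp.mulSqrtRNDeriv_leftInverse hμμ' hμ'μ).surjective,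
    Lp.coeFn_mulSqrtRNDeriv hμμ' hμ'μ, fun ψ hψ _ _ hf₁ =>
      Lp.mulSqrtRNDeriv_regularRepFun hμμ' hμ'μ (MeasurableEquiv.mulLeft ψ) (hqi ψ hψ).1
        (hqi' ψ hψ).2 hf₁⟩
end

section
/- For every n ≥ 1, the linear span of the functions x ↦ exp((b,x) − (Ax,x)), where b ranges over ℝⁿ, A ranges over symmetric positive-definite real n×n matrices, and (·,·) is the standard inner product on ℝⁿ, is dense in the Hilbert space L²(ℝⁿ, λ, ℝ), where λ is Lebesgue measure on ℝⁿ. -/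
/-!
Let `w(x) = exp(-‖x‖²)`. A continuous compactly supported `g` can be written `g = h w` with `h`
continuous and vanishing at infinity, i.e. `h` is a function on the one-point compactification of
`ℝⁿ` vanishing at `∞`. The functions `x ↦ exp(⟪b, x⟫ - c‖x‖²)`, `c > 0`, extended by `0` at `∞`,
are closed under multiplication and separate points, so by Stone–Weierstrass their span is
uniformly dense among such `h`. Multiplication by `w ∈ L²` turns uniform approximation into `L²`
approximation and maps each of them to a Gaussian `exp(⟪b, x⟫ - (c + 1)‖x‖²)`; since continuous
compactly supported functions are dense in `L²`, so is the span of the Gaussians.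
-/

open MeasureTheory Filter Topology
open scoped RealInnerProductSpace ENNReal

theorem Algebra.mem_span_insert_one_of_mem_adjoin {R A : Type*} [CommSemiring R] [Semiring A]
    [Algebra R A] {S : Set A} (hmul : ∀ f ∈ S, ∀ g ∈ S, f * g ∈ S) {p : A}
    (hp : p ∈ Algebra.adjoin R S) : p ∈ Submodule.span R (insert 1 S) := by
  rw [← Subalgebra.mem_toSubmodule, Algebra.adjoin_eq_span] at hp
  refine Submodule.span_mono (fun f hf ↦ ?_) hp
  induction hf using Submonoid.closure_induction with
  | mem f hf => exact Set.mem_insert_of_mem _ hf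
  | one => exact Set.mem_insert _ _
  | mul f₁ f₂ _ _ ih₁ ih₂ =>
    rcases ih₁ with rfl | h₁
    · rwa [one_mul]
    rcases ih₂ with rfl | h₂
    · rw [mul_one]; exact Set.mem_insert_of_mem _ h₁
    exact Set.mem_insert_of_mem _ (hmul _ h₁ _ h₂)

namespace OnePoint

variable {X : Type*} [TopologicalSpace X]

theorem exists_continuousMap_extend {Y : Type*} [TopologicalSpace Y] [R1Space X] {g : X → Y}
    (hg : Continuous g) {y : Y} (hy : Tendsto g (cocompact X) (𝓝 y)) :
    ∃ f : C(OnePoint X, Y), f ∞ = y ∧ ∀ x : X, f x = g x :=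
  ⟨continuousMapMk ⟨g, hg⟩ y (by rwa [coclosedCompact_eq_cocompact]), rfl, fun _ ↦ rfl⟩

/-- Stone–Weierstrass for functions vanishing at infinity. -/
theorem mem_closure_span_of_mul_mem [LocallyCompactSpace X] [T2Space X]
    {S : Set C(OnePoint X, ℝ)} (hmul : ∀ f ∈ S, ∀ g ∈ S, f * g ∈ S) (hS : ∀ f ∈ S, f ∞ = 0)
    (hsep : ∀ x y : OnePoint X, x ≠ y → ∃ f ∈ S, f x ≠ f y)
    {g : C(OnePoint X, ℝ)} (hg : g ∞ = 0) :
    g ∈ closure (Submodule.span ℝ S : Set C(OnePoint X, ℝ)) := by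
  have hspan : ∀ z ∈ Submodule.span ℝ S, z ∞ = 0 := fun z hz ↦
    (Submodule.span_le
      (p := LinearMap.ker (ContinuousMap.evalCLM ℝ (∞ : OnePoint X)).toLinearMap)).2 hS hz
  have hsep' : (Algebra.adjoin ℝ S).SeparatesPoints := fun x y hxy ↦ by
    obtain ⟨f, hf, hfxy⟩ := hsep x y hxy
    exact ⟨f, ⟨f, Algebra.subset_adjoin hf, rfl⟩, hfxy⟩
  rw [Metric.mem_closure_iff]
  intro ε hε
  obtain ⟨⟨p, hp⟩, hpg⟩ :=
    ContinuousMap.exists_mem_subalgebra_near_continuousMap_of_separatesPoints _ hsep' g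
      (ε / 2) (by positivity)
  obtain ⟨a, z, hz, rfl⟩ :=
    Submodule.mem_span_insert.1 (Algebra.mem_span_insert_one_of_mem_adjoin hmul hp)
  have hclose : ∀ x, |a + z x - g x| < ε / 2 := fun x ↦ by
    simpa using (ContinuousMap.norm_coe_le_norm _ x).trans_lt hpg
  -- the constant term is small because `z` and `g` both vanish at `∞`
  have ha : |a| < ε / 2 := by simpa [hspan z hz, hg] using hclose ∞
  refine ⟨z, hz, (ContinuousMap.dist_lt_iff hε).2 fun x ↦ ?_⟩
  rw [Real.dist_eq]
  calc |g x - z x| = |a - (a + z x - g x)| := by ring_nf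
    _ ≤ |a| + |a + z x - g x| := abs_sub _ _
    _ < ε / 2 + ε / 2 := add_lt_add ha (hclose x)
    _ = ε := add_halves ε

theorem norm_apply_mul_le (f : C(OnePoint X, ℝ)) (w : X → ℝ) (x : X) :
    ‖f x * w x‖ ≤ ‖f‖ * ‖w x‖ :=
  (norm_mul_le _ _).trans (mul_le_mul_of_nonneg_right (f.norm_coe_le_norm x) (norm_nonneg _))

variable [MeasurableSpace X] [OpensMeasurableSpace X] {μ : Measure X} {p : ℝ≥0∞} {w : X → ℝ}

theorem memLp_mul_of_memLp (hw : MemLp w p μ) (f : C(OnePoint X, ℝ)) :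
    MemLp (fun x : X ↦ f x * w x) p μ :=
  hw.of_le_mul ((f.continuous.comp continuous_coe).aestronglyMeasurable.mul hw.1)
    (ae_of_all _ (norm_apply_mul_le f w))

variable [Fact (1 ≤ p)]

noncomputable def restrictMulLp (hw : MemLp w p μ) : C(OnePoint X, ℝ) →L[ℝ] Lp ℝ p μ :=
  LinearMap.mkContinuous
    { toFun f := (memLp_mul_of_memLp hw f).toLp _
      map_add' f g := by
        rw [← MemLp.toLp_add]
        exact MemLp.toLp_congr _ _ (ae_of_all _ fun x ↦ add_mul (f x) (g x) (w x))
      map_smul' a f := by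
        rw [← MemLp.toLp_const_smul]
        exact MemLp.toLp_congr _ _ (ae_of_all _ fun x ↦ mul_assoc a (f x) (w x)) }
    ‖hw.toLp w‖ fun f ↦ by
      have h := eLpNorm_le_mul_eLpNorm_of_ae_le_mul (ae_of_all μ (norm_apply_mul_le f w)) p
      simp only [LinearMap.coe_mk, AddHom.coe_mk, Lp.norm_toLp]
      rw [mul_comm]
      refine (ENNReal.toReal_mono (by finiteness) h).trans_eq ?_
      rw [ENNReal.toReal_mul, ENNReal.toReal_ofReal (norm_nonneg f)]

theorem coeFn_restrictMulLp (hw : MemLp w p μ) (f : C(OnePoint X, ℝ)) :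
    restrictMulLp hw f =ᵐ[μ] fun x ↦ f x * w x :=
  (memLp_mul_of_memLp hw f).coeFn_toLp

end OnePoint

namespace MeasureTheory.Lp

variable {α E : Type*} [TopologicalSpace α] [NormalSpace α] [R1Space α]
  [WeaklyLocallyCompactSpace α] [MeasurableSpace α] [BorelSpace α] {μ : Measure α} [μ.Regular]
  [NormedAddCommGroup E] [NormedSpace ℝ E] {p : ℝ≥0∞} [Fact (1 ≤ p)]

theorem dense_of_forall_hasCompactSupport (hp : p ≠ ∞) {s : Set (Lp E p μ)}
    (hs : ∀ g : α → E, Continuous g → HasCompactSupport g → ∀ hg : MemLp g p μ,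
      hg.toLp g ∈ closure s) :
    Dense s := by
  intro F
  rw [← closure_closure, EMetric.mem_closure_iff]
  intro ε hε
  obtain ⟨δ, hδ, hδε⟩ := exists_between hε
  obtain ⟨g, hgc, hFg, hg, hgp⟩ :=
    (Lp.memLp F).exists_hasCompactSupport_eLpNorm_sub_le hp hδ.ne'
  refine ⟨hgp.toLp g, hs g hg hgc hgp, ?_⟩
  rw [← Lp.toLp_coeFn F (Lp.memLp F), Lp.edist_toLp_toLp]
  exact hFg.trans_lt hδε

end MeasureTheory.Lp

section Gaussian

variable {V : Type*} [NormedAddCommGroup V] [InnerProductSpace ℝ V]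

noncomputable def gaussExp (c : ℝ) (b x : V) : ℝ := Real.exp (⟪b, x⟫ - c * ‖x‖ ^ 2)

theorem gaussExp_pos (c : ℝ) (b x : V) : 0 < gaussExp c b x := Real.exp_pos _

@[fun_prop]
theorem continuous_gaussExp (c : ℝ) (b : V) : Continuous (gaussExp c b) := by
  unfold gaussExp; fun_prop

theorem gaussExp_mul_gaussExp (c₁ c₂ : ℝ) (b₁ b₂ x : V) :
    gaussExp c₁ b₁ x * gaussExp c₂ b₂ x = gaussExp (c₁ + c₂) (b₁ + b₂) x := by
  rw [gaussExp, gaussExp, gaussExp, ← Real.exp_add, inner_add_left]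
  ring_nf

theorem gaussExp_lt_gaussExp_self {u v : V} (h : u ≠ v) :
    gaussExp 1 ((2 : ℝ) • v) u < gaussExp 1 ((2 : ℝ) • v) v := by
  have key : ∀ x : V, ⟪(2 : ℝ) • v, x⟫ - 1 * ‖x‖ ^ 2 = ‖v‖ ^ 2 - ‖x - v‖ ^ 2 := fun x ↦ by
    rw [norm_sub_sq_real, real_inner_smul_left, real_inner_comm]; ring
  rw [gaussExp, gaussExp, Real.exp_lt_exp, key, key, sub_self, norm_zero]
  have : 0 < ‖u - v‖ := norm_pos_iff.2 (sub_ne_zero.2 h)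
  nlinarith

variable [FiniteDimensional ℝ V]

theorem tendsto_gaussExp_cocompact {c : ℝ} (hc : 0 < c) (b : V) :
    Tendsto (gaussExp c b) (cocompact V) (𝓝 0) := by
  have hquad : Tendsto (fun t : ℝ ↦ ‖b‖ * t - c * t ^ 2) atTop atBot := by
    have h : Tendsto (fun t : ℝ ↦ t * (c * t - ‖b‖)) atTop atTop :=
      tendsto_id.atTop_mul_atTop₀
        (tendsto_atTop_add_const_right _ _ (tendsto_id.const_mul_atTop hc))
    refine tendsto_neg_atTop_atBot.comp h |>.congr fun t ↦ ?_
    simp only [Function.comp_apply]; ring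
  refine squeeze_zero (fun x ↦ (gaussExp_pos c b x).le) (fun x ↦ ?_)
    ((Real.tendsto_exp_atBot.comp hquad).comp tendsto_norm_cocompact_atTop)
  exact Real.exp_le_exp.2 (by linarith [real_inner_le_norm b x])

variable [MeasurableSpace V] [BorelSpace V]

theorem integrable_gaussExp {c : ℝ} (hc : 0 < c) (b : V) : Integrable (gaussExp c b) := by
  have h := GaussianFourier.integrable_cexp_neg_mul_sq_norm_add (V := V) (b := c)
    (by simpa using hc) 1 b
  refine h.norm.congr (ae_of_all _ fun x ↦ ?_)
  beta_reduce
  rw [Complex.norm_exp, gaussExp]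
  congr 1
  simp [Complex.add_re, Complex.mul_re, ← Complex.ofReal_pow]
  ring

theorem memLp_two_gaussExp {c : ℝ} (hc : 0 < c) (b : V) : MemLp (gaussExp c b) 2 := by
  rw [memLp_two_iff_integrable_sq (continuous_gaussExp c b).aestronglyMeasurable]
  refine (integrable_gaussExp (add_pos hc hc) (b + b)).congr (ae_of_all _ fun x ↦ ?_)
  simp only [sq, gaussExp_mul_gaussExp]

end Gaussian

section OnePointGaussian

variable (V : Type*) [NormedAddCommGroup V] [InnerProductSpace ℝ V]

def onePointGaussExps : Set C(OnePoint V, ℝ) :=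
  {f | f OnePoint.infty = 0 ∧ ∃ c > 0, ∃ b : V, ∀ x : V, f x = gaussExp c b x}

variable {V}

theorem mul_mem_onePointGaussExps {f g : C(OnePoint V, ℝ)} (hf : f ∈ onePointGaussExps V)
    (hg : g ∈ onePointGaussExps V) : f * g ∈ onePointGaussExps V := by
  obtain ⟨hf_infty, c₁, hc₁, b₁, hf⟩ := hf
  obtain ⟨-, c₂, hc₂, b₂, hg⟩ := hg
  refine ⟨by simp [hf_infty], c₁ + c₂, add_pos hc₁ hc₂, b₁ + b₂, fun x ↦ ?_⟩
  rw [ContinuousMap.mul_apply, hf, hg, gaussExp_mul_gaussExp]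

variable [FiniteDimensional ℝ V]

theorem exists_mem_onePointGaussExps {c : ℝ} (hc : 0 < c) (b : V) :
    ∃ f ∈ onePointGaussExps V, ∀ x : V, f x = gaussExp c b x := by
  obtain ⟨f, hf_infty, hf⟩ :=
    OnePoint.exists_continuousMap_extend (continuous_gaussExp c b) (tendsto_gaussExp_cocompact hc b)
  exact ⟨f, ⟨hf_infty, c, hc, b, hf⟩, hf⟩

theorem onePointGaussExps_separatesPoints (x y : OnePoint V) (hxy : x ≠ y) :
    ∃ f ∈ onePointGaussExps V, f x ≠ f y := by
  induction x using OnePoint.rec with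
  | infty =>
    induction y using OnePoint.rec with
    | infty => exact absurd rfl hxy
    | coe v =>
      obtain ⟨f, hfS, hf⟩ := exists_mem_onePointGaussExps one_pos (0 : V)
      exact ⟨f, hfS, by rw [hfS.1, hf]; exact (gaussExp_pos 1 0 v).ne⟩
  | coe u =>
    induction y using OnePoint.rec with
    | infty =>
      obtain ⟨f, hfS, hf⟩ := exists_mem_onePointGaussExps one_pos (0 : V)
      exact ⟨f, hfS, by rw [hfS.1, hf]; exact (gaussExp_pos 1 0 u).ne'⟩
    | coe v =>
      obtain ⟨f, hfS, hf⟩ := exists_mem_onePointGaussExps one_pos ((2 : ℝ) • v)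
      refine ⟨f, hfS, ?_⟩
      rw [hf, hf]
      exact (gaussExp_lt_gaussExp_self fun h ↦ hxy (congrArg _ h)).ne

end OnePointGaussian

theorem gaussExp_eq_exp_quadratic {n : ℕ} (c : ℝ) (b x : EuclideanSpace ℝ (Fin n)) :
    gaussExp c b x = Real.exp ((∑ i, b i * x i) -
      ∑ i, (c • 1 : Matrix (Fin n) (Fin n) ℝ).mulVec (fun k ↦ x k) i * x i) := by
  have hmulVec : ∀ i, (c • 1 : Matrix (Fin n) (Fin n) ℝ).mulVec (fun k ↦ x k) i = c * x i := by
    simp [Matrix.smul_mulVec]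
  rw [gaussExp, ← real_inner_self_eq_norm_sq]
  simp only [PiLp.inner_apply, hmulVec, Finset.mul_sum, RCLike.inner_apply, conj_trivial,
    mul_comm (x _), mul_assoc]

theorem exists_posDef_of_ae_eq_gaussExp {n : ℕ} {c : ℝ} (hc : 0 < c) (b : EuclideanSpace ℝ (Fin n))
    {F : EuclideanSpace ℝ (Fin n) → ℝ} (hF : F =ᵐ[volume] gaussExp c b) :
    ∃ (b : EuclideanSpace ℝ (Fin n)) (A : Matrix (Fin n) (Fin n) ℝ), A.IsSymm ∧ A.PosDef ∧
      F =ᵐ[volume] fun x ↦ Real.exp ((∑ i, b i * x i) - ∑ i, A.mulVec (fun k ↦ x k) i * x i) :=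
  ⟨b, c • 1, Matrix.isSymm_one.smul c, Matrix.PosDef.one.smul hc,
    hF.trans (ae_of_all _ (gaussExp_eq_exp_quadratic c b))⟩

theorem stmt_11_general (n : ℕ) :
    Dense ((Submodule.span ℝ
      {F : Lp ℝ 2 (volume : Measure (EuclideanSpace ℝ (Fin n))) |
        ∃ (b : EuclideanSpace ℝ (Fin n)) (A : Matrix (Fin n) (Fin n) ℝ),
          A.IsSymm ∧ A.PosDef ∧
          (F : EuclideanSpace ℝ (Fin n) → ℝ) =ᵐ[volume]
            fun x => Real.exp ((∑ i, b i * x i) - ∑ i, A.mulVec (fun k => x k) i * x i)}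
      : Submodule ℝ (Lp ℝ 2 (volume : Measure (EuclideanSpace ℝ (Fin n)))))
      : Set (Lp ℝ 2 (volume : Measure (EuclideanSpace ℝ (Fin n))))) := by
  let T := OnePoint.restrictMulLp (memLp_two_gaussExp one_pos (0 : EuclideanSpace ℝ (Fin n)))
  refine Lp.dense_of_forall_hasCompactSupport ENNReal.ofNat_ne_top fun g hg hgc hgp ↦ ?_
  obtain ⟨f, hf_infty, hf⟩ := OnePoint.exists_continuousMap_extend
    (hg.div (continuous_gaussExp 1 0) fun x ↦ (gaussExp_pos 1 0 x).ne')
    (hgc.mul_right (f' := fun x ↦ (gaussExp 1 0 x)⁻¹)).is_zero_at_infty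
  have hTf : T f = hgp.toLp g := Lp.ext <| (OnePoint.coeFn_restrictMulLp _ f).trans <|
    .trans (ae_of_all _ fun x ↦ by simp [hf, (gaussExp_pos 1 0 x).ne']) hgp.coeFn_toLp.symm
  have hf_mem := OnePoint.mem_closure_span_of_mul_mem
    (fun _ hf _ hg ↦ mul_mem_onePointGaussExps hf hg) (fun _ hf ↦ hf.1)
    onePointGaussExps_separatesPoints hf_infty
  rw [← hTf]
  refine closure_mono ?_ (image_closure_subset_closure_image T.continuous ⟨f, hf_mem, rfl⟩)
  refine (Submodule.image_span_subset_span T.toLinearMap _).trans (Submodule.span_mono ?_)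
  rintro _ ⟨f, ⟨-, c, hc, b, hfb⟩, rfl⟩
  refine exists_posDef_of_ae_eq_gaussExp (add_pos hc one_pos) b <|
    (OnePoint.coeFn_restrictMulLp _ f).trans (ae_of_all _ fun x ↦ ?_)
  simp only [hfb, gaussExp_mul_gaussExp, add_zero]

/-- The linear span of the Gaussian-type exponentials
`x ↦ exp((b,x) − (Ax,x))`, with `b ∈ ℝⁿ` and `A` a symmetric positive-definite real
`n × n` matrix, is dense in `L²(ℝⁿ, λ, ℝ)` for Lebesgue measure `λ`. -/
theorem stmt_11 (n : ℕ) (hn : 1 ≤ n) :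
    Dense ((Submodule.span ℝ
      {F : Lp ℝ 2 (volume : Measure (EuclideanSpace ℝ (Fin n))) |
        ∃ (b : EuclideanSpace ℝ (Fin n)) (A : Matrix (Fin n) (Fin n) ℝ),
          A.IsSymm ∧ A.PosDef ∧
          (F : EuclideanSpace ℝ (Fin n) → ℝ) =ᵐ[volume]
            fun x => Real.exp ((∑ i, b i * x i) - ∑ i, A.mulVec (fun k => x k) i * x i)}
      : Submodule ℝ (Lp ℝ 2 (volume : Measure (EuclideanSpace ℝ (Fin n)))))
      : Set (Lp ℝ 2 (volume : Measure (EuclideanSpace ℝ (Fin n))))) :=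
  stmt_11_general n
end
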